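/- Let T be a complete binary tree with n leaves, let Π be a bijection from the leaf set to the internal node multiset (root counted twice), and for S ⊆ L(V_T) let Q = S ∪ Π(S). If X is a maximal S-occupied subtree for a nonempty S ⊆ L(V_T), then |(∂Q) ∩ V_X| ≥ |V_X \ Q| / 2, i.e., at least half of the nodes of X not in Q lie in the node boundary of Q. -/

import Mathlib

/-!
Let `X` be the subtree at `x` and `B = X \ Q`. Since `X` is occupied, its leaves lie in `Q`,
so every vertex of `B` is internal. A vertex of `B` that is not in the boundary `∂Q` has both
children outside `Q`, hence in `B`; sending such a vertex to its two children is injective with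
disjoint images, so `B \ ∂Q` has at most `|B| / 2` elements, i.e. `∂Q ∩ X` has at least `|B| / 2`.
-/

/-- Vertices of the complete binary tree of height `h`: lists of booleans of
length at most `h`, recorded from the vertex up to the root (so the root is `[]`,
and a child of `v` is `b :: v` for a bit `b`). The depth of a vertex is the
length of its list. -/
def CBTVert (h : ℕ) : Type := {l : List Bool // l.length ≤ h}

/-- The complete binary tree of height `h` as a simple graph: `u` and `v` are
adjacent iff one is a child of the other. -/
def cbt (h : ℕ) : SimpleGraph (CBTVert h) where
  Adj u v := (∃ b, u.1 = b :: v.1) ∨ (∃ b, v.1 = b :: u.1)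
  symm := ⟨by intro u v hv; tauto⟩
  loopless := ⟨by
    rintro u (⟨b, hb⟩ | ⟨b, hb⟩) <;>
      simpa using congrArg List.length hb⟩

/-- The node boundary of a set `S`: vertices outside `S` adjacent to some vertex of `S`. -/
def nbd {V : Type*} (G : SimpleGraph V) (S : Set V) : Set V :=
  {v | v ∉ S ∧ ∃ u ∈ S, G.Adj u v}

/-- Leaves are the vertices of maximal depth (the tree is complete). -/
def isLeaf {h : ℕ} (v : CBTVert h) : Prop := v.1.length = h

/-- Internal nodes are the non-leaf vertices. -/
def isInternal {h : ℕ} (v : CBTVert h) : Prop := v.1.length < h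

/-- The root of the complete binary tree. -/
def root (h : ℕ) : CBTVert h := ⟨[], by simp⟩

/-- `desc x v` means `v` belongs to the subtree rooted at `x`
(`x`'s list is a suffix of `v`'s list). -/
def desc {h : ℕ} (x v : CBTVert h) : Prop := x.1 <:+ v.1

/-- The subtree rooted at `x` is `S`-occupied if all its leaves belong to `S`. -/
def occupied {h : ℕ} (S : Set (CBTVert h)) (x : CBTVert h) : Prop :=
  ∀ v : CBTVert h, desc x v → isLeaf v → v ∈ S

/-- The subtree rooted at `x` is a maximal `S`-occupied subtree. -/
def maxOccupied {h : ℕ} (S : Set (CBTVert h)) (x : CBTVert h) : Prop :=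
  occupied S x ∧ ∀ y, desc y x → occupied S y → y = x

/-- Leaf nodes of the complete binary tree of height h. -/
def Leaf (h : ℕ) : Type := {v : CBTVert h // isLeaf v}

/-- Internal-node slots: each internal node is one slot, with one extra slot
for a duplicate copy of the root (so there are as many slots as leaves). -/
def Slot (h : ℕ) : Type := {v : CBTVert h // isInternal v} ⊕ Unit

/-- The tree vertex corresponding to a slot (the extra slot is the root). -/
def slotVert {h : ℕ} : Slot h → CBTVert h := Sum.elim Subtype.val (fun _ => root h)

/-- Q = S ∪ Π(S), as a set of tree vertices. -/
def Qset {h : ℕ} (π : Leaf h ≃ Slot h) (S : Set (Leaf h)) : Set (CBTVert h) :=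
  (Subtype.val '' S) ∪ ((fun u => slotVert (π u)) '' S)

/-- The contracted graph G_Π on leaf nodes: two distinct leaves are adjacent
iff some tree edge joins a member of one pair {v, Π(v)} to a member of the other. -/
def Gpi {h : ℕ} (π : Leaf h ≃ Slot h) : SimpleGraph (Leaf h) where
  Adj u v := u ≠ v ∧ ∃ a b : CBTVert h, (cbt h).Adj a b ∧
      (a = u.1 ∨ a = slotVert (π u)) ∧ (b = v.1 ∨ b = slotVert (π v))
  symm := ⟨by
    rintro u v ⟨huv, a, b, hab, ha, hb⟩
    exact ⟨huv.symm, b, a, hab.symm, hb, ha⟩⟩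
  loopless := ⟨fun u hu => hu.1 rfl⟩

/-- The node expansion of a graph: the infimum of |∂S|/|S| over nonempty
vertex sets S with |S| ≤ n/2. -/
noncomputable def nodeExpansion {V : Type*} (G : SimpleGraph V) : ℝ :=
  sInf {r : ℝ | ∃ S : Set V, S.Nonempty ∧ 2 * S.ncard ≤ Nat.card V ∧
    r = (nbd G S).ncard / S.ncard}

instance CBTVert.finite (h : ℕ) : Finite (CBTVert h) :=
  (List.finite_length_le Bool h).to_subtype

namespace CBTVert

variable {h : ℕ}

def child (v : CBTVert h) (hv : isInternal v) (b : Bool) : CBTVert h := ⟨b :: v.1, hv⟩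

theorem child_injective {v w : CBTVert h} {hv : isInternal v} {hw : isInternal w} {b c : Bool}
    (hvw : v.child hv b = w.child hw c) : v = w ∧ b = c := by
  have := congrArg Subtype.val hvw
  simp only [child, List.cons.injEq] at this
  exact ⟨Subtype.ext this.2, this.1⟩

theorem cbt_adj_child (v : CBTVert h) (hv : isInternal v) (b : Bool) :
    (cbt h).Adj (v.child hv b) v :=
  Or.inl ⟨b, rfl⟩

theorem desc_child {x v : CBTVert h} (hxv : desc x v) (hv : isInternal v) (b : Bool) :
    desc x (v.child hv b) :=
  hxv.trans (List.suffix_cons b v.1)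

theorem two_mul_ncard_le_of_child_mem {C B : Set (CBTVert h)} (hC : ∀ v ∈ C, isInternal v)
    (hB : ∀ v (hv : v ∈ C) b, v.child (hC v hv) b ∈ B) : 2 * C.ncard ≤ B.ncard := by
  let f : C × Bool → B := fun p => ⟨p.1.1.child (hC _ p.1.2) p.2, hB _ p.1.2 p.2⟩
  have hf : Function.Injective f := by
    rintro ⟨⟨v, hv⟩, b⟩ ⟨⟨w, hw⟩, c⟩ hvw
    obtain ⟨rfl, rfl⟩ := child_injective (congrArg Subtype.val hvw)
    rfl
  have := Nat.card_le_card_of_injective f hf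
  rwa [Nat.card_prod, Nat.card_eq_fintype_card (α := Bool), Fintype.card_bool, mul_comm,
    Nat.card_coe_set_eq, Nat.card_coe_set_eq] at this

end CBTVert

open CBTVert

variable {h : ℕ}

theorem occupied.mono {S T : Set (CBTVert h)} {x : CBTVert h} (hx : occupied S x) (hST : S ⊆ T) :
    occupied T x :=
  fun v hxv hv => hST (hx v hxv hv)

theorem isInternal_of_occupied {Q : Set (CBTVert h)} {x v : CBTVert h} (hx : occupied Q x)
    (hxv : desc x v) (hv : v ∉ Q) : isInternal v :=
  v.2.lt_of_ne fun hleaf => hv (hx v hxv hleaf)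

theorem child_notMem_of_notMem_nbd {Q : Set (CBTVert h)} {v : CBTVert h} (hv : v ∉ Q)
    (hvnbd : v ∉ nbd (cbt h) Q) (hint : isInternal v) (b : Bool) : v.child hint b ∉ Q :=
  fun hc => hvnbd ⟨hv, _, hc, cbt_adj_child v hint b⟩

theorem ncard_diff_le_two_mul_ncard_nbd_inter {Q : Set (CBTVert h)} {x : CBTVert h}
    (hx : occupied Q x) :
    ({v | desc x v} \ Q).ncard ≤ 2 * (nbd (cbt h) Q ∩ {v | desc x v}).ncard := by
  set B := {v | desc x v} \ Q
  set A := nbd (cbt h) Q ∩ {v | desc x v}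
  have hAB : A ⊆ B := fun v hv => ⟨hv.2, hv.1.1⟩
  have hint : ∀ v ∈ B \ A, isInternal v := fun v hv => isInternal_of_occupied hx hv.1.1 hv.1.2
  have hcount : 2 * (B \ A).ncard ≤ B.ncard :=
    two_mul_ncard_le_of_child_mem hint fun v hv b =>
      ⟨desc_child hv.1.1 _ b,
        child_notMem_of_notMem_nbd hv.1.2 (fun hvQ => hv.2 ⟨hvQ, hv.1.1⟩) _ b⟩
  have hsplit := Set.ncard_sdiff_add_ncard_of_subset hAB B.toFinite
  omega

theorem stmt3_general (h : ℕ) (π : Leaf h ≃ Slot h) (S : Set (Leaf h))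
    (x : CBTVert h) (hx : maxOccupied (Subtype.val '' S) x) :
    ((nbd (cbt h) (Qset π S) ∩ {v | desc x v}).ncard : ℝ) ≥
      (({v | desc x v} \ Qset π S).ncard : ℝ) / 2 := by
  have hQ : occupied (Qset π S) x := hx.1.mono Set.subset_union_left
  have hcount : (({v | desc x v} \ Qset π S).ncard : ℝ) ≤
      2 * (nbd (cbt h) (Qset π S) ∩ {v | desc x v}).ncard := by
    exact_mod_cast ncard_diff_le_two_mul_ncard_nbd_inter hQ
  linarith

/-- Lemma 3: if X is a maximal S-occupied subtree (rooted at x) for a nonempty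
set S of leaves, then at least half of the vertices of X outside Q = S ∪ Π(S)
lie in the node boundary of Q. -/
theorem stmt3 (h : ℕ) (π : Leaf h ≃ Slot h) (S : Set (Leaf h)) (hS : S.Nonempty)
    (x : CBTVert h) (hx : maxOccupied (Subtype.val '' S) x) :
    ((nbd (cbt h) (Qset π S) ∩ {v | desc x v}).ncard : ℝ) ≥
      (({v | desc x v} \ Qset π S).ncard : ℝ) / 2 :=
  stmt3_general h π S x hx
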